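/- arXiv:2509.19114 — 6 statements merged into one kernel-verified Lean document; each statement's English description precedes it below -/
import Mathlib

section
/- For each positive integer n, the map g defined on S = {(h,i,j,k) : 1 ≤ h,i,j ≤ k ≤ n} by g(h,i,j,k) = ((h,i),(j,k)) if h ≤ i and g(h,i,j,k) = ((j,k),(i,h-1)) if h > i, is a bijection from S onto T = {((x1,x2),(x3,x4)) : 1 ≤ x1 ≤ x2 ≤ n and 1 ≤ x3 ≤ x4 ≤ n}. -/
/-- The Benjamin–Orrison map. -/
def gBO : ℕ × ℕ × ℕ × ℕ → (ℕ × ℕ) × (ℕ × ℕ) := fun p =>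
  let h := p.1; let i := p.2.1; let j := p.2.2.1; let k := p.2.2.2
  if h ≤ i then ((h, i), (j, k)) else ((j, k), (i, h - 1))

/-- S = {(h,i,j,k) : 1 ≤ h,i,j ≤ k ≤ n}. -/
def setS (n : ℕ) : Set (ℕ × ℕ × ℕ × ℕ) :=
  {p | 1 ≤ p.1 ∧ 1 ≤ p.2.1 ∧ 1 ≤ p.2.2.1 ∧
       p.1 ≤ p.2.2.2 ∧ p.2.1 ≤ p.2.2.2 ∧ p.2.2.1 ≤ p.2.2.2 ∧ p.2.2.2 ≤ n}

/-- T = {((x1,x2),(x3,x4)) : 1 ≤ x1 ≤ x2 ≤ n, 1 ≤ x3 ≤ x4 ≤ n}. -/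
def setT (n : ℕ) : Set ((ℕ × ℕ) × (ℕ × ℕ)) :=
  {t | 1 ≤ t.1.1 ∧ t.1.1 ≤ t.1.2 ∧ t.1.2 ≤ n ∧
       1 ≤ t.2.1 ∧ t.2.1 ≤ t.2.2 ∧ t.2.2 ≤ n}

theorem benjamin_orrison_bijOn (n : ℕ) (hn : 0 < n) :
    Set.BijOn gBO (setS n) (setT n) := by
  refine ⟨?_, ?_, ?_⟩
  · rintro ⟨h, i, j, k⟩ ⟨h1, h2, h3, h4, h5, h6, h7⟩
    simp only [gBO, setT, Set.mem_setOf_eq]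
    split_ifs with hle <;> refine ⟨?_, ?_, ?_, ?_, ?_, ?_⟩ <;> dsimp only at * <;> omega
  · rintro ⟨h, i, j, k⟩ hs ⟨h', i', j', k'⟩ hs' heq
    simp only [gBO] at heq
    simp only [setS, Set.mem_setOf_eq] at hs hs'
    split_ifs at heq <;> simp_all [Prod.ext_iff] <;> omega
  · rintro ⟨⟨a, b⟩, c, d⟩ ⟨t1, t2, t3, t4, t5, t6⟩
    by_cases hbd : b ≤ d
    · refine ⟨(a, b, c, d), ?_, ?_⟩
      · simp only [setS, Set.mem_setOf_eq]; refine ⟨?_,?_,?_,?_,?_,?_,?_⟩ <;> dsimp only at * <;> omega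
      · simp only [gBO]; rw [if_pos t2]
    · refine ⟨(d + 1, c, a, b), ?_, ?_⟩
      · simp only [setS, Set.mem_setOf_eq]; refine ⟨?_,?_,?_,?_,?_,?_,?_⟩ <;> dsimp only at * <;> omega
      · simp only [gBO]; rw [if_neg (by dsimp only at *; omega)]; simp
end

section
/- For every positive integer n, the polynomial identity holds: sum over i from 1 to n of (q^{i-1} + q^i + q^{i+1})·([i]_q)^3 plus sum over i from 1 to n of (q^{i-1}[i-1]_q + q^i)·([i]_q)^2 equals ([n+1]_q)^2 · ([n]_q)^2. -/
open Polynomial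

/-- The q-analogue [m]_q = 1 + q + ... + q^{m-1} as a polynomial in q = X. -/
noncomputable def qa (m : ℕ) : Polynomial ℤ := ∑ j ∈ Finset.range m, X ^ j

/-! The sum telescopes: the summand at `i = n + 1` equals `[n+2]² [n+1]² - [n+1]² [n]²`.
Writing `a = [n+1]_q` and `x = q^n`, so that `[n]_q = a - x` and `[n+2]_q = a + q x`, and
dividing by `a² x`, this reduces to `(q - 1) [n+1]_q + 1 = q^(n+1)`. -/

lemma qa_succ (m : ℕ) : qa (m + 1) = qa m + X ^ m := by
  simp only [qa, Finset.sum_range_succ]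

lemma sub_one_mul_qa_add_one (m : ℕ) : (X - 1) * qa m + 1 = X ^ m := by
  rw [qa, mul_comm, geom_sum_mul, sub_add_cancel]

lemma qa_cubes_increment (n : ℕ) :
    ((X : ℤ[X]) ^ n + X ^ (n + 1) + X ^ (n + 2)) * qa (n + 1) ^ 3
      + (X ^ n * qa n + X ^ (n + 1)) * qa (n + 1) ^ 2
      = qa (n + 2) ^ 2 * qa (n + 1) ^ 2 - qa (n + 1) ^ 2 * qa n ^ 2 := by
  rw [pow_succ X (n + 1), qa_succ (n + 1), ← sub_one_mul_qa_add_one (n + 1), qa_succ n,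
    ← sub_one_mul_qa_add_one n]
  ring

theorem q_analogue_sum_cubes_general (n : ℕ) :
    (∑ i ∈ Finset.Icc 1 n,
        ((X : Polynomial ℤ) ^ (i - 1) + X ^ i + X ^ (i + 1)) * (qa i) ^ 3)
      + (∑ i ∈ Finset.Icc 1 n,
        ((X : Polynomial ℤ) ^ (i - 1) * qa (i - 1) + X ^ i) * (qa i) ^ 2)
      = (qa (n + 1)) ^ 2 * (qa n) ^ 2 := by
  rw [← Finset.sum_add_distrib]
  induction n with
  | zero => simp [qa]
  | succ n ih =>
    rw [Finset.sum_Icc_succ_top (Nat.le_add_left 1 n), ih, Nat.add_sub_cancel,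
      qa_cubes_increment]
    ring

theorem q_analogue_sum_cubes (n : ℕ) (hn : 0 < n) :
    (∑ i ∈ Finset.Icc 1 n,
        ((X : Polynomial ℤ) ^ (i - 1) + X ^ i + X ^ (i + 1)) * (qa i) ^ 3)
      + (∑ i ∈ Finset.Icc 1 n,
        ((X : Polynomial ℤ) ^ (i - 1) * qa (i - 1) + X ^ i) * (qa i) ^ 2)
      = (qa (n + 1)) ^ 2 * (qa n) ^ 2 :=
  q_analogue_sum_cubes_general n
end

section
/- For every positive integer n, the sum over k from 1 to n of q^{2n-2k} · (1-q^k)^2 · (1-q^{2k}) / ((1-q)^2 (1-q^2)) equals the square of the q-binomial coefficient [n+1 choose 2]_q. -/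
/-- The field of rational functions in q over ℚ. -/
noncomputable def q : RatFunc ℚ := RatFunc.X

/-!
After multiplying by `(1 - q)^2 (1 - q^2)^2` the claim is a polynomial identity, valid in every
commutative ring. Going from `n` to `n + 1` multiplies the old sum by `x^2` and adds one term,
so the induction step comes down to `(1 - x^(n+2))^2 = x^2 (1 - x^n)^2 + (1 - x^2)(1 - x^(2n+2))`.
-/

open Finset

theorem sq_one_sub_pow_add_two {R : Type*} [CommRing R] (x : R) (n : ℕ) :
    (1 - x ^ (n + 2)) ^ 2 = x ^ 2 * (1 - x ^ n) ^ 2 + (1 - x ^ 2) * (1 - x ^ (2 * n + 2)) := by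
  ring

theorem one_sub_sq_mul_sum_Icc_pow_mul_one_sub_pow {R : Type*} [CommRing R] (x : R) (n : ℕ) :
    (1 - x ^ 2) * ∑ k ∈ Icc 1 n, x ^ (2 * n - 2 * k) * (1 - x ^ k) ^ 2 * (1 - x ^ (2 * k))
      = ((1 - x ^ (n + 1)) * (1 - x ^ n)) ^ 2 := by
  induction n with
  | zero => simp
  | succ n ih =>
    have shift : ∀ k ∈ Icc 1 n, x ^ (2 * (n + 1) - 2 * k) * (1 - x ^ k) ^ 2 * (1 - x ^ (2 * k))
        = x ^ 2 * (x ^ (2 * n - 2 * k) * (1 - x ^ k) ^ 2 * (1 - x ^ (2 * k))) := by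
      intro k hk
      rw [show 2 * (n + 1) - 2 * k = 2 + (2 * n - 2 * k) by grind, pow_add]
      ring
    rw [sum_Icc_succ_top (by omega), sum_congr rfl shift, ← mul_sum, Nat.sub_self, pow_zero,
      mul_add, mul_left_comm, ih]
    linear_combination -(1 - x ^ (n + 1)) ^ 2 * sq_one_sub_pow_add_two x n

theorem one_sub_q_pow_ne_zero {m : ℕ} (hm : 0 < m) : 1 - q ^ m ≠ 0 := by
  rw [sub_ne_zero, ne_comm]
  have h := (map_ne_zero_iff _ (RatFunc.algebraMap_injective ℚ)).2
    (Polynomial.X_pow_sub_C_ne_zero hm (1 : ℚ))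
  simpa [q, sub_eq_zero] using h

theorem warnaar_q_analogue_general (n : ℕ) :
    (∑ k ∈ Finset.Icc 1 n,
        q ^ (2 * n - 2 * k) * (1 - q ^ k) ^ 2 * (1 - q ^ (2 * k)) /
          ((1 - q) ^ 2 * (1 - q ^ 2)))
      = ((1 - q ^ (n + 1)) * (1 - q ^ n) / ((1 - q) * (1 - q ^ 2))) ^ 2 := by
  have h1 : (1 : RatFunc ℚ) - q ≠ 0 := by simpa using one_sub_q_pow_ne_zero one_pos
  have h2 : (1 : RatFunc ℚ) - q ^ 2 ≠ 0 := one_sub_q_pow_ne_zero two_pos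
  rw [← sum_div, div_pow, ← one_sub_sq_mul_sum_Icc_pow_mul_one_sub_pow,
    div_eq_div_iff (by positivity) (by positivity)]
  ring

theorem warnaar_q_analogue (n : ℕ) (hn : 0 < n) :
    (∑ k ∈ Finset.Icc 1 n,
        q ^ (2 * n - 2 * k) * (1 - q ^ k) ^ 2 * (1 - q ^ (2 * k)) /
          ((1 - q) ^ 2 * (1 - q ^ 2)))
      = ((1 - q ^ (n + 1)) * (1 - q ^ n) / ((1 - q) * (1 - q ^ 2))) ^ 2 :=
  warnaar_q_analogue_general n
end

section
/- For every positive integer n, the sum over k from 1 to n of q^{4(n-k)} · (1-q^k)^2/(1-q)^2 · (1 + q^2 - 2q^{k+1})/(1-q^2) equals the square of the q-binomial coefficient [n+1 choose 2]_q. -/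
theorem sq_sub_pow_four_mul_sq_eq {R : Type*} [CommRing R] (x : R) (k : ℕ) :
    ((1 - x ^ (k + 2)) * (1 - x ^ (k + 1))) ^ 2 - x ^ 4 * ((1 - x ^ (k + 1)) * (1 - x ^ k)) ^ 2
      = (1 - x ^ 2) * ((1 - x ^ (k + 1)) ^ 2 * (1 + x ^ 2 - 2 * x ^ (k + 2))) := by
  ring

theorem one_sub_sq_mul_sum_eq {R : Type*} [CommRing R] (x : R) (n : ℕ) :
    (1 - x ^ 2) * ∑ k ∈ Finset.Icc 1 n,
        x ^ (4 * (n - k)) * ((1 - x ^ k) ^ 2 * (1 + x ^ 2 - 2 * x ^ (k + 1)))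
      = ((1 - x ^ (n + 1)) * (1 - x ^ n)) ^ 2 := by
  induction n with
  | zero => simp
  | succ n ih =>
    have hshift : ∀ k ∈ Finset.Icc 1 n, x ^ (4 * (n + 1 - k)) = x ^ 4 * x ^ (4 * (n - k)) :=
      fun k hk => by rw [← pow_add]; congr 1; have := (Finset.mem_Icc.mp hk).2; omega
    rw [Finset.sum_Icc_succ_top (by omega), Nat.sub_self, mul_zero, pow_zero, one_mul,
      Finset.sum_congr rfl fun k hk => by rw [hshift k hk, mul_assoc], ← Finset.mul_sum, mul_add,
      mul_left_comm, ih, ← sq_sub_pow_four_mul_sq_eq]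
    ring

theorem sum_eq_sq_qBinomial_two {K : Type*} [Field K] (x : K) (hx : 1 - x ^ 2 ≠ 0) (n : ℕ) :
    (∑ k ∈ Finset.Icc 1 n,
        x ^ (4 * (n - k)) * ((1 - x ^ k) ^ 2 / (1 - x) ^ 2) *
          ((1 + x ^ 2 - 2 * x ^ (k + 1)) / (1 - x ^ 2)))
      = ((1 - x ^ (n + 1)) * (1 - x ^ n) / ((1 - x) * (1 - x ^ 2))) ^ 2 := by
  have hx1 : 1 - x ≠ 0 := fun h => hx (by linear_combination (1 + x) * h)
  calc _ = (∑ k ∈ Finset.Icc 1 n,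
          x ^ (4 * (n - k)) * ((1 - x ^ k) ^ 2 * (1 + x ^ 2 - 2 * x ^ (k + 1))))
            / ((1 - x) ^ 2 * (1 - x ^ 2)) := by
        rw [Finset.sum_div]
        refine Finset.sum_congr rfl fun k _ => ?_
        rw [mul_assoc, div_mul_div_comm, mul_div_assoc']
    _ = _ := by
        rw [div_pow, ← one_sub_sq_mul_sum_eq]
        field_simp

theorem RatFunc.one_sub_X_pow_ne_zero {K : Type*} [Field K] {k : ℕ} (hk : k ≠ 0) :
    (1 : RatFunc K) - RatFunc.X ^ k ≠ 0 := by
  rw [sub_ne_zero, ← RatFunc.algebraMap_X, ← map_pow,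
    ← map_one (algebraMap (Polynomial K) (RatFunc K)), Ne, (IsFractionRing.injective _ _).eq_iff]
  intro h
  exact hk (by simpa using (congrArg Polynomial.natDegree h).symm)

theorem zhao_feng_q_analogue_general (n : ℕ) :
    (∑ k ∈ Finset.Icc 1 n,
        q ^ (4 * (n - k)) * ((1 - q ^ k) ^ 2 / (1 - q) ^ 2) *
          ((1 + q ^ 2 - 2 * q ^ (k + 1)) / (1 - q ^ 2)))
      = ((1 - q ^ (n + 1)) * (1 - q ^ n) / ((1 - q) * (1 - q ^ 2))) ^ 2 :=
  sum_eq_sq_qBinomial_two q (RatFunc.one_sub_X_pow_ne_zero two_ne_zero) n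

theorem zhao_feng_q_analogue (n : ℕ) (hn : 0 < n) :
    (∑ k ∈ Finset.Icc 1 n,
        q ^ (4 * (n - k)) * ((1 - q ^ k) ^ 2 / (1 - q) ^ 2) *
          ((1 + q ^ 2 - 2 * q ^ (k + 1)) / (1 - q ^ 2)))
      = ((1 - q ^ (n + 1)) * (1 - q ^ n) / ((1 - q) * (1 - q ^ 2))) ^ 2 :=
  zhao_feng_q_analogue_general n
end

section
/- For every positive integer n, the two sets of 4-tuples of integers B' = {(a,b,c,d) : b = i+1, 1 ≤ a,c,d ≤ i for some 1 ≤ i ≤ n, and c ≥ d} and A' = {(a,b,c,d) : c = i, 1 ≤ a,b,d ≤ i for some 1 ≤ i ≤ n, and a < b} are disjoint, and their union equals the set {(a,b,c,d) : 1 ≤ a < b ≤ n+1 and 1 ≤ d ≤ c ≤ n}. -/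
/-- B' : labels (a,b,c,d) with b = i+1, 1 ≤ a,c,d ≤ i for some 1 ≤ i ≤ n, and c ≥ d. -/
def Bge (n : ℕ) : Set (ℕ × ℕ × ℕ × ℕ) :=
  {p | ∃ i, 1 ≤ i ∧ i ≤ n ∧ p.2.1 = i + 1 ∧
       1 ≤ p.1 ∧ p.1 ≤ i ∧ 1 ≤ p.2.2.1 ∧ p.2.2.1 ≤ i ∧ 1 ≤ p.2.2.2 ∧ p.2.2.2 ≤ i ∧
       p.2.2.2 ≤ p.2.2.1}

/-- A' : labels (a,b,c,d) with c = i, 1 ≤ a,b,d ≤ i for some 1 ≤ i ≤ n, and a < b. -/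
def Alt (n : ℕ) : Set (ℕ × ℕ × ℕ × ℕ) :=
  {p | ∃ i, 1 ≤ i ∧ i ≤ n ∧ p.2.2.1 = i ∧
       1 ≤ p.1 ∧ p.1 ≤ i ∧ 1 ≤ p.2.1 ∧ p.2.1 ≤ i ∧ 1 ≤ p.2.2.2 ∧ p.2.2.2 ≤ i ∧
       p.1 < p.2.1}

theorem one_block_assembly (n : ℕ) (hn : 0 < n) :
    Disjoint (Bge n) (Alt n) ∧
    Bge n ∪ Alt n =
      {p : ℕ × ℕ × ℕ × ℕ | 1 ≤ p.1 ∧ p.1 < p.2.1 ∧ p.2.1 ≤ n + 1 ∧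
        1 ≤ p.2.2.2 ∧ p.2.2.2 ≤ p.2.2.1 ∧ p.2.2.1 ≤ n} := by
  constructor
  · rw [Set.disjoint_left]
    rintro ⟨a, b, c, d⟩ ⟨i, hi⟩ ⟨j, hj⟩
    simp only at hi hj
    omega
  · ext ⟨a, b, c, d⟩
    simp only [Set.mem_union, Bge, Alt, Set.mem_setOf_eq]
    constructor
    · rintro (⟨i, hi⟩ | ⟨i, hi⟩) <;> omega
    · rintro ⟨h1, h2, h3, h4, h5, h6⟩
      rcases le_or_gt b c with hbc | hbc
      · exact Or.inr ⟨c, by omega⟩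
      · exact Or.inl ⟨b - 1, by omega⟩
end

section
/- For every integer n ≥ 2, the four sets of 4-tuples of integers A = {(x,y,z,w) : z = i, x,y,w ∈ {1,...,i}, 1 ≤ i ≤ n}, B = {(x,y,z,w) : y = i+1, x,z,w ∈ {1,...,i}, 1 ≤ i ≤ n}, C = {(x,y,z,w) : x = i+1, y ∈ {2,...,i+1}, z,w ∈ {1,...,i}, 1 ≤ i ≤ n}, and D = {(x,y,z,w) : w = i, x,y ∈ {1,...,i}, z ∈ {0,...,i-1}, 1 ≤ i ≤ n} are pairwise disjoint, and their union equals the set {(x,y,z,w) : 1 ≤ x,y ≤ n+1, 1 ≤ z,w ≤ n} with the following modifications: the n(n+1)(2n+1)/6 tuples of D with z = 0 lie outside that set, and the tuples of that set with y = 1 and x > max(y,z,w) (precisely those (x,1,z,w) with x = i+1, z,w ∈ {1,...,i} for some 1 ≤ i ≤ n) are covered by none of A, B, C, D. -/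
/-- Block A: z = i, x,y,w ∈ {1,...,i} for some 1 ≤ i ≤ n. -/
def blkA (n : ℕ) : Set (ℕ × ℕ × ℕ × ℕ) :=
  {p | ∃ i, 1 ≤ i ∧ i ≤ n ∧ p.2.2.1 = i ∧
       1 ≤ p.1 ∧ p.1 ≤ i ∧ 1 ≤ p.2.1 ∧ p.2.1 ≤ i ∧ 1 ≤ p.2.2.2 ∧ p.2.2.2 ≤ i}

/-- Block B: y = i+1, x,z,w ∈ {1,...,i} for some 1 ≤ i ≤ n. -/
def blkB (n : ℕ) : Set (ℕ × ℕ × ℕ × ℕ) :=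
  {p | ∃ i, 1 ≤ i ∧ i ≤ n ∧ p.2.1 = i + 1 ∧
       1 ≤ p.1 ∧ p.1 ≤ i ∧ 1 ≤ p.2.2.1 ∧ p.2.2.1 ≤ i ∧ 1 ≤ p.2.2.2 ∧ p.2.2.2 ≤ i}

/-- Block C: x = i+1, y ∈ {2,...,i+1}, z,w ∈ {1,...,i} for some 1 ≤ i ≤ n. -/
def blkC (n : ℕ) : Set (ℕ × ℕ × ℕ × ℕ) :=
  {p | ∃ i, 1 ≤ i ∧ i ≤ n ∧ p.1 = i + 1 ∧
       2 ≤ p.2.1 ∧ p.2.1 ≤ i + 1 ∧ 1 ≤ p.2.2.1 ∧ p.2.2.1 ≤ i ∧ 1 ≤ p.2.2.2 ∧ p.2.2.2 ≤ i}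

/-- Block D: w = i, x,y ∈ {1,...,i}, z ∈ {0,...,i-1} for some 1 ≤ i ≤ n. -/
def blkD (n : ℕ) : Set (ℕ × ℕ × ℕ × ℕ) :=
  {p | ∃ i, 1 ≤ i ∧ i ≤ n ∧ p.2.2.2 = i ∧
       1 ≤ p.1 ∧ p.1 ≤ i ∧ 1 ≤ p.2.1 ∧ p.2.1 ≤ i ∧ p.2.2.1 < i}

/-- The rectangular region R_3(n) = {1,...,n+1}² × {1,...,n}². -/
def regR (n : ℕ) : Set (ℕ × ℕ × ℕ × ℕ) :=
  {p | 1 ≤ p.1 ∧ p.1 ≤ n + 1 ∧ 1 ≤ p.2.1 ∧ p.2.1 ≤ n + 1 ∧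
       1 ≤ p.2.2.1 ∧ p.2.2.1 ≤ n ∧ 1 ≤ p.2.2.2 ∧ p.2.2.2 ≤ n}

/-- The overhang: tuples of D with z = 0. -/
def ovh (n : ℕ) : Set (ℕ × ℕ × ℕ × ℕ) := {p ∈ blkD n | p.2.2.1 = 0}

/-- The vacancies: (x,1,z,w) with x = i+1, z,w ∈ {1,...,i} for some 1 ≤ i ≤ n. -/
def vac (n : ℕ) : Set (ℕ × ℕ × ℕ × ℕ) :=
  {p | ∃ i, 1 ≤ i ∧ i ≤ n ∧ p.1 = i + 1 ∧ p.2.1 = 1 ∧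
       1 ≤ p.2.2.1 ∧ p.2.2.1 ≤ i ∧ 1 ≤ p.2.2.2 ∧ p.2.2.2 ≤ i}

lemma memA {n : ℕ} {p : ℕ × ℕ × ℕ × ℕ} : p ∈ blkA n ↔
    1 ≤ p.2.2.1 ∧ p.2.2.1 ≤ n ∧ 1 ≤ p.1 ∧ p.1 ≤ p.2.2.1 ∧
    1 ≤ p.2.1 ∧ p.2.1 ≤ p.2.2.1 ∧ 1 ≤ p.2.2.2 ∧ p.2.2.2 ≤ p.2.2.1 :=
  ⟨fun ⟨_, h⟩ => by omega, fun h => ⟨p.2.2.1, by omega⟩⟩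

lemma memB {n : ℕ} {p : ℕ × ℕ × ℕ × ℕ} : p ∈ blkB n ↔
    2 ≤ p.2.1 ∧ p.2.1 ≤ n + 1 ∧ 1 ≤ p.1 ∧ p.1 < p.2.1 ∧
    1 ≤ p.2.2.1 ∧ p.2.2.1 < p.2.1 ∧ 1 ≤ p.2.2.2 ∧ p.2.2.2 < p.2.1 :=
  ⟨fun ⟨_, h⟩ => by omega, fun h => ⟨p.2.1 - 1, by omega⟩⟩

lemma memC {n : ℕ} {p : ℕ × ℕ × ℕ × ℕ} : p ∈ blkC n ↔
    2 ≤ p.1 ∧ p.1 ≤ n + 1 ∧ 2 ≤ p.2.1 ∧ p.2.1 ≤ p.1 ∧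
    1 ≤ p.2.2.1 ∧ p.2.2.1 < p.1 ∧ 1 ≤ p.2.2.2 ∧ p.2.2.2 < p.1 :=
  ⟨fun ⟨_, h⟩ => by omega, fun h => ⟨p.1 - 1, by omega⟩⟩

lemma memD {n : ℕ} {p : ℕ × ℕ × ℕ × ℕ} : p ∈ blkD n ↔
    1 ≤ p.2.2.2 ∧ p.2.2.2 ≤ n ∧ 1 ≤ p.1 ∧ p.1 ≤ p.2.2.2 ∧
    1 ≤ p.2.1 ∧ p.2.1 ≤ p.2.2.2 ∧ p.2.2.1 < p.2.2.2 :=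
  ⟨fun ⟨_, h⟩ => by omega, fun h => ⟨p.2.2.2, by omega⟩⟩

lemma memV {n : ℕ} {p : ℕ × ℕ × ℕ × ℕ} : p ∈ vac n ↔
    2 ≤ p.1 ∧ p.1 ≤ n + 1 ∧ p.2.1 = 1 ∧
    1 ≤ p.2.2.1 ∧ p.2.2.1 < p.1 ∧ 1 ≤ p.2.2.2 ∧ p.2.2.2 < p.1 :=
  ⟨fun ⟨_, h⟩ => by omega, fun h => ⟨p.1 - 1, by omega⟩⟩

lemma memR {n : ℕ} {p : ℕ × ℕ × ℕ × ℕ} : p ∈ regR n ↔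
    1 ≤ p.1 ∧ p.1 ≤ n + 1 ∧ 1 ≤ p.2.1 ∧ p.2.1 ≤ n + 1 ∧
    1 ≤ p.2.2.1 ∧ p.2.2.1 ≤ n ∧ 1 ≤ p.2.2.2 ∧ p.2.2.2 ≤ n := Iff.rfl

lemma memO {n : ℕ} {p : ℕ × ℕ × ℕ × ℕ} : p ∈ ovh n ↔
    1 ≤ p.2.2.2 ∧ p.2.2.2 ≤ n ∧ 1 ≤ p.1 ∧ p.1 ≤ p.2.2.2 ∧
    1 ≤ p.2.1 ∧ p.2.1 ≤ p.2.2.2 ∧ p.2.2.1 = 0 := by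
  simp only [ovh, Set.mem_setOf_eq, memD]
  omega

lemma ovh_eq_coe (n : ℕ) : ovh n =
    ↑((Finset.Icc 1 n).biUnion fun i =>
      Finset.Icc 1 i ×ˢ Finset.Icc 1 i ×ˢ {0} ×ˢ {i}) := by
  ext ⟨x, y, z, w⟩
  simp only [memO, Finset.coe_biUnion, Set.mem_iUnion, Finset.mem_coe,
    Finset.mem_biUnion, Finset.mem_Icc, Finset.mem_product, Finset.mem_singleton]
  constructor
  · rintro h; exact ⟨w, by omega, by omega, by omega, by omega, rfl⟩
  · rintro ⟨i, hi, h1, h2, h3, h4⟩; omega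

lemma sumsq (n : ℕ) : 6 * (∑ i ∈ Finset.Icc 1 n, i * i) = n * (n + 1) * (2 * n + 1) := by
  induction n with
  | zero => simp
  | succ m ih =>
      rw [Finset.sum_Icc_succ_top (by omega), Nat.mul_add, ih]
      ring

theorem first_fitting (n : ℕ) (hn : 2 ≤ n) :
    (Disjoint (blkA n) (blkB n) ∧ Disjoint (blkA n) (blkC n) ∧
     Disjoint (blkA n) (blkD n) ∧ Disjoint (blkB n) (blkC n) ∧
     Disjoint (blkB n) (blkD n) ∧ Disjoint (blkC n) (blkD n)) ∧
    ovh n ∩ regR n = ∅ ∧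
    vac n ⊆ regR n ∧
    blkA n ∪ blkB n ∪ blkC n ∪ blkD n = (regR n \ vac n) ∪ ovh n ∧
    (ovh n).ncard = n * (n + 1) * (2 * n + 1) / 6 := by
  refine ⟨⟨?_, ?_, ?_, ?_, ?_, ?_⟩, ?_, ?_, ?_, ?_⟩
  · rw [Set.disjoint_left]; intro p h1 h2; rw [memA] at h1; rw [memB] at h2; omega
  · rw [Set.disjoint_left]; intro p h1 h2; rw [memA] at h1; rw [memC] at h2; omega
  · rw [Set.disjoint_left]; intro p h1 h2; rw [memA] at h1; rw [memD] at h2; omega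
  · rw [Set.disjoint_left]; intro p h1 h2; rw [memB] at h1; rw [memC] at h2; omega
  · rw [Set.disjoint_left]; intro p h1 h2; rw [memB] at h1; rw [memD] at h2; omega
  · rw [Set.disjoint_left]; intro p h1 h2; rw [memC] at h1; rw [memD] at h2; omega
  · ext p; simp only [Set.mem_inter_iff, Set.mem_empty_iff_false, iff_false, not_and,
      memO, memR]; omega
  · intro p h; rw [memV] at h; rw [memR]; omega
  · ext p
    simp only [Set.mem_union, Set.mem_diff, memA, memB, memC, memD, memO, memR, memV]
    omega
  · rw [ovh_eq_coe, Set.ncard_coe_finset, Finset.card_biUnion]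
    · have : ∀ i ∈ Finset.Icc 1 n,
          (Finset.Icc 1 i ×ˢ Finset.Icc 1 i ×ˢ ({0} ×ˢ {i} : Finset (ℕ × ℕ))).card = i * i := by
        intro i _
        simp [Finset.card_product, Nat.card_Icc]
      rw [Finset.sum_congr rfl this]
      have h := sumsq n
      omega
    · intro i _ j _ hij
      simp only [Finset.disjoint_left, Finset.mem_product, Finset.mem_singleton]
      rintro ⟨x, y, z, w⟩ ⟨_, _, _, h1⟩ ⟨_, _, _, h2⟩
      exact hij (h1 ▸ h2 ▸ rfl)
end
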